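/- Let S(λ,α;k) be a fat staircase with bad foundation, where α = (α_1,…,α_n), λ is a partition, k ≥ 0, and λ_1 − k ≤ n. If T is a semistandard Young tableau of shape S(λ,α;k) with lattice reading word, then every entry in the first row of the foundation λ lies in the set R_{α,k} = {1 + Σ_{i=1}^{j} α_{n+1−i} : j = 1,…,n} ∪ ({1} if k > 0, else ∅); moreover the value 1 appears at most k times in that row and every other value of R_{α,k} appears at most once. -/

import Mathlib

open Finset

namespace SchurStair

/-- A diagram is a finite set of cells `(row, column)`, with row `0` at the top. -/
abbrev Diagram := Finset (ℕ × ℕ)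

/-- `T` is a semistandard filling of `D`: positive entries, rows weakly increase
left to right, columns strictly increase top to bottom. -/
def IsSSYT (D : Diagram) (T : ℕ × ℕ → ℕ) : Prop :=
  (∀ x ∈ D, 1 ≤ T x) ∧
  (∀ i j : ℕ, (i, j) ∈ D → (i, j + 1) ∈ D → T (i, j) ≤ T (i, j + 1)) ∧
  (∀ i j : ℕ, (i, j) ∈ D → (i + 1, j) ∈ D → T (i, j) < T (i + 1, j))

/-- The content of a filling: `content D T v` is the number of cells of `D`
with entry `v`. -/
def content (D : Diagram) (T : ℕ × ℕ → ℕ) : ℕ → ℕ :=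
  fun v => (D.filter fun x => T x = v).card

/-- `y` is read at or before `x` in the reading word
(rows right to left, proceeding from the top row to the bottom). -/
def ReadBefore (x y : ℕ × ℕ) : Prop :=
  y.1 < x.1 ∨ (y.1 = x.1 ∧ x.2 ≤ y.2)

open Classical in
/-- The reading word of `T` on `D` is lattice: in every prefix, the number of
`v+1`'s read is at least the number of `v+2`'s read. -/
def IsLattice (D : Diagram) (T : ℕ × ℕ → ℕ) : Prop :=
  ∀ x ∈ D, ∀ v : ℕ,
    (D.filter fun y => ReadBefore x y ∧ T y = v + 2).card ≤
      (D.filter fun y => ReadBefore x y ∧ T y = v + 1).card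

/-- The semistandard Young tableaux of shape `D` and content `c`
(normalized to be `0` off `D`). -/
def SSYTs (D : Diagram) (c : ℕ → ℕ) : Set ((ℕ × ℕ) → ℕ) :=
  {T | IsSSYT D T ∧ (∀ x ∉ D, T x = 0) ∧ content D T = c}

/-- The SSYT of shape `D` and content `c` whose reading word is lattice. -/
def LatticeSSYTs (D : Diagram) (c : ℕ → ℕ) : Set ((ℕ × ℕ) → ℕ) :=
  {T | T ∈ SSYTs D c ∧ IsLattice D T}

/-- The coefficient of the monomial `x^c` in the skew Schur function `s_D`. -/
noncomputable def ssytCount (D : Diagram) (c : ℕ → ℕ) : ℕ := (SSYTs D c).ncard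

/-- By the Littlewood–Richardson rule, the coefficient of the Schur function
`s_c` in the Schur expansion of `s_D`. -/
noncomputable def lrCount (D : Diagram) (c : ℕ → ℕ) : ℕ := (LatticeSSYTs D c).ncard

/-- `s_{D₁} - s_{D₂}` is Schur-positive (phrased via the LR rule). -/
def SchurPos (D₁ D₂ : Diagram) : Prop := ∀ c : ℕ → ℕ, lrCount D₂ c ≤ lrCount D₁ c

/-- `α` encodes a composition `(α_1, …, α_n)`: the 1-based part `α_i` is `α (i-1)`. -/
def IsComposition (n : ℕ) (α : ℕ → ℕ) : Prop := ∀ i < n, 0 < α i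

/-- Height of column `c` (0-based) of the staircase `δ_α`. -/
def stairColHt (n : ℕ) (α : ℕ → ℕ) (c : ℕ) : ℕ := ∑ i ∈ Finset.Ico c n, α i

/-- The number of rows `|α|` of the fat staircases `δ_α`, `Δ_α`. -/
def stairLen (n : ℕ) (α : ℕ → ℕ) : ℕ := ∑ i ∈ Finset.range n, α i

/-- Row lengths of the staircase partition `δ_α = (n^{α_n}, …, 1^{α_1})`. -/
def deltaPart (n : ℕ) (α : ℕ → ℕ) : ℕ → ℕ :=
  fun r => ((Finset.range n).filter fun c => r < stairColHt n α c).card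

/-- The rotated fat staircase `Δ_α`, inside its `|α| × n` bounding box. -/
def deltaUp (n : ℕ) (α : ℕ → ℕ) : Diagram :=
  (Finset.range (stairLen n α) ×ˢ Finset.range n).filter fun x =>
    stairLen n α ≤ x.1 + stairColHt n α (n - 1 - x.2)

/-- Cells of a partition `lam` (with at most `m` parts), top-left justified. -/
def partCells (m : ℕ) (lam : ℕ → ℕ) : Diagram :=
  (Finset.range m ×ˢ Finset.range (lam 0)).filter fun x => x.2 < lam x.1

/-- Translate a diagram down by `dr` and right by `dc`. -/
def shiftD (D : Diagram) (dr dc : ℕ) : Diagram := D.image fun x => (x.1 + dr, x.2 + dc)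

/-- The fat staircase with bad foundation `S(λ, α; k)`: the foundation `lam`
(at most `m` parts) is placed immediately below `Δ_α`, its first row beginning
one box below and `k` boxes left of the bottom-left box of `Δ_α`, so that
the rows overlap in `lam 0 - k` column positions. -/
def shapeS (n : ℕ) (α : ℕ → ℕ) (m : ℕ) (lam : ℕ → ℕ) (k : ℕ) : Diagram :=
  shiftD (deltaUp n α) 0 k ∪ shiftD (partCells m lam) (stairLen n α) 0

/-- The direct sum `λ ⊕ Δ_α` (disconnected, `λ` to the lower left). -/
def dsumS (n : ℕ) (α : ℕ → ℕ) (m : ℕ) (lam : ℕ → ℕ) : Diagram :=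
  shiftD (deltaUp n α) 0 (lam 0) ∪ shiftD (partCells m lam) (stairLen n α) 0

/-- The hook `(a, 1^{l-1})` as a partition. -/
def hookPart (a l : ℕ) : ℕ → ℕ :=
  fun i => if i = 0 then a else if i < l then 1 else 0

/-- The set `R_{α,k}` of possible first-row foundation entries:
`{1 + α_n + ⋯ + α_{n+1-j} : 1 ≤ j ≤ n}`, together with `1` when `k > 0`. -/
def Rfin (n : ℕ) (α : ℕ → ℕ) (k : ℕ) : Finset ℕ :=
  ((Finset.Icc 1 n).image fun j => 1 + ∑ i ∈ Finset.Ico (n - j) n, α i) ∪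
    (if 0 < k then {1} else ∅)

/-- The complement `p^c` of a partition `p` in the rectangle `(b^a)`
(`a` rows of width `b`): the 180° rotation of `(b^a) / p`. -/
def complementPart (a b : ℕ) (p : ℕ → ℕ) : ℕ → ℕ :=
  fun i => if i < a then b - p (a - 1 - i) else 0

/-- Cells of the skew diagram `p / q`, where `p` has at most `a` parts. -/
def skewCells (a : ℕ) (p q : ℕ → ℕ) : Diagram :=
  (Finset.range a ×ˢ Finset.range (p 0)).filter fun x => q x.1 ≤ x.2 ∧ x.2 < p x.1

/-- Extend a tuple `Fin a → Fin (b+1)` to a function `ℕ → ℕ` (zero beyond `a`);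
used to enumerate the partitions contained in the rectangle `(b^a)`. -/
def extFun (a b : ℕ) (f : Fin a → Fin (b + 1)) : ℕ → ℕ :=
  fun i => if h : i < a then (f ⟨i, h⟩ : ℕ) else 0

/-- The content function of a partition `p`: the entry `v ≥ 1` occurs `p (v-1)` times. -/
def partContent (p : ℕ → ℕ) : ℕ → ℕ := fun v => if v = 0 then 0 else p (v - 1)

open Classical in
/-- The Littlewood–Richardson coefficient `c^ν_{κσ}` (with `ν` a partition of at
most `a` parts): the number of lattice SSYT of shape `ν/κ` and content `σ`. -/
noncomputable def lrCoeff (a : ℕ) (ν κ : ℕ → ℕ) (σ : ℕ → ℕ) : ℕ :=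
  if ∀ i, κ i ≤ ν i then lrCount (skewCells a ν κ) σ else 0

open Classical in
/-- The truncated complement, in the rectangle `(b^a)`, of the symmetric function
with Schur coefficient family `F`: `c(∑_ν F(ν) s_ν) = ∑_{ν ⊆ (b^a)} F(ν) s_{ν^c}`,
expressed as a monomial-coefficient (content-counting) function. -/
noncomputable def truncComplement (a b : ℕ) (F : (ℕ → ℕ) → ℕ) : (ℕ → ℕ) → ℕ :=
  fun c => ∑ ν : Fin a → Fin (b + 1),
    if Antitone (extFun a b ν) then
      F (extFun a b ν) *
        ssytCount (skewCells a (complementPart a b (extFun a b ν)) fun _ => 0) c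
    else 0

/-- `D` is a skew diagram: row `i` occupies the columns `g i ≤ j < f i` for
nested partitions `g ⊆ f`. -/
def IsSkew (D : Diagram) : Prop :=
  ∃ f g : ℕ → ℕ, Antitone f ∧ Antitone g ∧ (∀ i, g i ≤ f i) ∧
    ∀ x : ℕ × ℕ, x ∈ D ↔ g x.1 ≤ x.2 ∧ x.2 < f x.1

/-- One more than the largest row index of `D`. -/
def diagHeight (D : Diagram) : ℕ := D.sup fun x => x.1 + 1

/-- One more than the largest column index of `D`. -/
def diagWidth (D : Diagram) : ℕ := D.sup fun x => x.2 + 1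

/-- The direct sum `D₁ ⊕ D₂`: `D₂` placed above and to the right of `D₁`. -/
def directSum (D₁ D₂ : Diagram) : Diagram :=
  shiftD D₁ (diagHeight D₂) 0 ∪ shiftD D₂ 0 (diagWidth D₁)

/-- The 180° rotation `D°` of a diagram (within its bounding box). -/
def rotateD (D : Diagram) : Diagram :=
  D.image fun x => (diagHeight D - 1 - x.1, diagWidth D - 1 - x.2)

end SchurStair

namespace SchurStair

/-!
Column strictness bounds every entry of `Δ_α` below by its position in its column. Reading
`Δ_α` row by row, right to left, a cell holding `v` above that bound would make the letters `v`
outnumber the letters `v - 1` read so far (all earlier cells being already filled canonically),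
so the column of height `h` holds exactly `1, …, h`, and the column heights are distinct.

Every cell read before a cell `x` of the first foundation row lies in `Δ_α` or to the right of
`x` in that row. If `x` holds `t ≥ 2`, the entries to its right are at least `t`, so the lattice
condition at `x` says that the `t`'s at and right of `x` number at most the columns of height
`t - 1`: at most one, and none unless `t ∈ R_{α,k}`. A `1` needs an empty cell above it, which
only the first `k` columns of the foundation row have.
-/

/-- Columns of `Δ_α` are numbered from the left, so their heights increase. -/
def deltaUpColHt (n : ℕ) (α : ℕ → ℕ) (c : ℕ) : ℕ := stairColHt n α (n - 1 - c)

section ColumnHeights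

variable {n : ℕ} {α : ℕ → ℕ}

lemma deltaUpColHt_le_stairLen (c : ℕ) : deltaUpColHt n α c ≤ stairLen n α := by
  rw [deltaUpColHt, stairColHt, stairLen, ← Nat.Ico_zero_eq_range]
  exact sum_le_sum_of_subset (Ico_subset_Ico (Nat.zero_le _) le_rfl)

lemma deltaUpColHt_mono : Monotone (deltaUpColHt n α) := fun c c' h => by
  rw [deltaUpColHt, deltaUpColHt, stairColHt, stairColHt]
  exact sum_le_sum_of_subset (Ico_subset_Ico (by omega) le_rfl)

lemma deltaUpColHt_pos (hα : IsComposition n α) {c : ℕ} (hc : c < n) :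
    0 < deltaUpColHt n α c :=
  sum_pos (fun i hi => hα i (mem_Ico.1 hi).2) ⟨n - 1 - c, mem_Ico.2 ⟨le_rfl, by omega⟩⟩

lemma deltaUpColHt_strictMonoOn (hα : IsComposition n α) :
    StrictMonoOn (deltaUpColHt n α) (Set.Iio n) := by
  intro c _ c' (hc' : c' < n) hcc'
  rw [deltaUpColHt, deltaUpColHt, stairColHt, stairColHt,
    ← sum_Ico_consecutive α (show n - 1 - c' ≤ n - 1 - c by omega) (show n - 1 - c ≤ n by omega)]
  have : 0 < ∑ i ∈ Ico (n - 1 - c') (n - 1 - c), α i :=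
    sum_pos (fun i hi => hα i (by have := (mem_Ico.1 hi).2; omega))
      ⟨n - 1 - c', mem_Ico.2 ⟨le_rfl, by omega⟩⟩
  omega

lemma card_filter_deltaUpColHt_add_one_eq_le_one (hα : IsComposition n α) (t : ℕ) :
    #{c ∈ range n | deltaUpColHt n α c + 1 = t} ≤ 1 :=
  card_le_one.2 fun _ ha _ hb => (deltaUpColHt_strictMonoOn hα).injOn
    (mem_range.1 (mem_filter.1 ha).1) (mem_range.1 (mem_filter.1 hb).1)
    (by have := (mem_filter.1 ha).2; have := (mem_filter.1 hb).2; omega)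

lemma card_filter_le_deltaUpColHt (s : ℕ) :
    #{c ∈ range n | s ≤ deltaUpColHt n α c} =
      #{c ∈ range n | s + 1 ≤ deltaUpColHt n α c} +
        #{c ∈ range n | deltaUpColHt n α c = s} := by
  rw [← card_union_of_disjoint (disjoint_filter.2 fun c _ h h' => by omega)]
  congr 1
  ext c
  simp only [mem_filter, mem_union, mem_range]
  omega

lemma one_add_deltaUpColHt_mem_Rfin {c : ℕ} (hc : c < n) (k : ℕ) :
    1 + deltaUpColHt n α c ∈ Rfin n α k :=
  mem_union_left _ (mem_image.2 ⟨c + 1, mem_Icc.2 ⟨by omega, by omega⟩, by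
    rw [show n - (c + 1) = n - 1 - c by omega]; rfl⟩)

lemma one_mem_Rfin {k : ℕ} (hk : 0 < k) : 1 ∈ Rfin n α k :=
  mem_union_right _ (by rw [if_pos hk]; exact mem_singleton_self 1)

end ColumnHeights

lemma IsSSYT.row_mono {D : Diagram} {T : ℕ × ℕ → ℕ} (hT : IsSSYT D T) {i j j' : ℕ}
    (hjj' : j ≤ j') (hrow : ∀ jj, j ≤ jj → jj ≤ j' → (i, jj) ∈ D) : T (i, j) ≤ T (i, j') := by
  induction j', hjj' using Nat.le_induction with
  | base => exact le_rfl
  | succ j' hj' ih =>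
    exact (ih fun jj h1 h2 => hrow jj h1 (by omega)).trans
      (hT.2.1 i j' (hrow j' hj' (by omega)) (hrow (j' + 1) (by omega) le_rfl))

section Shape

variable {n : ℕ} {α : ℕ → ℕ} {m : ℕ} {lam : ℕ → ℕ} {k : ℕ} {T : ℕ × ℕ → ℕ}

lemma mem_shapeS (hanti : Antitone lam) {x : ℕ × ℕ} :
    x ∈ shapeS n α m lam k ↔
      (x.1 < stairLen n α ∧ k ≤ x.2 ∧ x.2 - k < n ∧
        stairLen n α ≤ x.1 + deltaUpColHt n α (x.2 - k)) ∨
      (stairLen n α ≤ x.1 ∧ x.1 - stairLen n α < m ∧ x.2 < lam (x.1 - stairLen n α)) := by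
  simp only [shapeS, shiftD, deltaUp, partCells, mem_union, mem_image, mem_filter, mem_product,
    mem_range]
  constructor
  · rintro (⟨⟨r, c⟩, ⟨⟨hr, hc⟩, hL⟩, rfl⟩ | ⟨⟨i, j⟩, ⟨⟨hi, -⟩, hji⟩, rfl⟩)
    · exact Or.inl ⟨hr, by omega, by simpa using hc, by simpa [deltaUpColHt] using hL⟩
    · exact Or.inr ⟨by omega, by simpa using hi, by simpa using hji⟩
  · rintro (⟨h1, h2, h3, h4⟩ | ⟨h1, h2, h3⟩)
    · exact Or.inl ⟨(x.1, x.2 - k), ⟨⟨h1, h3⟩, by simpa [deltaUpColHt] using h4⟩,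
        by ext <;> simp only <;> omega⟩
    · exact Or.inr ⟨(x.1 - stairLen n α, x.2), ⟨⟨h2, h3.trans_le (hanti (Nat.zero_le _))⟩, h3⟩,
        by ext <;> simp only <;> omega⟩

lemma mk_add_mem_shapeS (hanti : Antitone lam) {r c : ℕ} (hc : c < n) (hr : r < stairLen n α)
    (hL : stairLen n α ≤ r + deltaUpColHt n α c) : (r, c + k) ∈ shapeS n α m lam k :=
  (mem_shapeS hanti).2 (Or.inl ⟨hr, by omega, by simpa using hc, by simpa using hL⟩)

lemma stairLen_mk_mem_shapeS (hanti : Antitone lam) (hm : ∀ i, m ≤ i → lam i = 0) {j : ℕ}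
    (hj : j < lam 0) : (stairLen n α, j) ∈ shapeS n α m lam k := by
  refine (mem_shapeS hanti).2 (Or.inr ⟨le_rfl, ?_, by simpa using hj⟩)
  by_contra! hm0
  have := hm 0 (by omega)
  omega

lemma mem_shapeS_of_le_of_le (hanti : Antitone lam) {r a b j : ℕ}
    (ha : (r, a) ∈ shapeS n α m lam k) (hb : (r, b) ∈ shapeS n α m lam k)
    (haj : a ≤ j) (hjb : j ≤ b) : (r, j) ∈ shapeS n α m lam k := by
  rw [mem_shapeS hanti] at ha hb ⊢
  simp only at ha hb ⊢
  have := deltaUpColHt_mono (n := n) (α := α) (show a - k ≤ j - k by omega)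
  omega

lemma entry_le_entry_of_mem_shapeS (hanti : Antitone lam) (hT : IsSSYT (shapeS n α m lam k) T)
    {r j j' : ℕ} (hj : (r, j) ∈ shapeS n α m lam k) (hj' : (r, j') ∈ shapeS n α m lam k)
    (hjj' : j ≤ j') : T (r, j) ≤ T (r, j') :=
  hT.row_mono hjj' fun _ h h' => mem_shapeS_of_le_of_le hanti hj hj' h h'

lemma le_stair_entry (hanti : Antitone lam) (hT : IsSSYT (shapeS n α m lam k) T)
    {c : ℕ} (hc : c < n) (r : ℕ) (hr : r < stairLen n α)
    (hL : stairLen n α ≤ r + deltaUpColHt n α c) :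
    r + deltaUpColHt n α c + 1 - stairLen n α ≤ T (r, c + k) := by
  have hx := hT.1 _ (mk_add_mem_shapeS hanti hc hr hL)
  induction r with
  | zero => have := deltaUpColHt_le_stairLen (n := n) (α := α) c; omega
  | succ r ih =>
    by_cases htop : stairLen n α ≤ r + deltaUpColHt n α c
    · have := ih (by omega) htop (hT.1 _ (mk_add_mem_shapeS hanti hc (by omega) htop))
      have := hT.2.2 r (c + k) (mk_add_mem_shapeS hanti hc (by omega) htop)
        (mk_add_mem_shapeS hanti hc hr hL)
      omega
    · omega

end Shape

/-- Rows `0, …, r - 1` of `Δ_α` hold the filling whose column of height `h` reads `1, …, h`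
downwards. -/
def CanonicalAbove (n : ℕ) (α : ℕ → ℕ) (k : ℕ) (T : ℕ × ℕ → ℕ) (r : ℕ) : Prop :=
  ∀ r' < r, ∀ c < n, stairLen n α ≤ r' + deltaUpColHt n α c →
    T (r', c + k) = r' + deltaUpColHt n α c + 1 - stairLen n α

section Counting

variable {n : ℕ} {α : ℕ → ℕ} {m : ℕ} {lam : ℕ → ℕ} {k : ℕ} {T : ℕ × ℕ → ℕ} {r j : ℕ}

open Classical in
lemma card_readBefore_le (hanti : Antitone lam) (hcan : CanonicalAbove n α k T r)
    (hrL : r ≤ stairLen n α) {w : ℕ}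
    (hrow : ∀ j', j ≤ j' → (r, j') ∈ shapeS n α m lam k → T (r, j') ≠ w) :
    #{y ∈ shapeS n α m lam k | ReadBefore (r, j) y ∧ T y = w} ≤
      #{c ∈ range n | stairLen n α - r + w ≤ deltaUpColHt n α c} := by
  have hcell : ∀ y ∈ {y ∈ shapeS n α m lam k | ReadBefore (r, j) y ∧ T y = w},
      y.1 < r ∧ k ≤ y.2 ∧ y.2 - k < n ∧ y.1 + deltaUpColHt n α (y.2 - k) + 1 = stairLen n α + w := by
    rintro ⟨y₁, y₂⟩ hy
    obtain ⟨hyD, hread, hTy⟩ := mem_filter.1 hy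
    rcases hread with hy₁ | ⟨rfl, hjy⟩
    · rcases (mem_shapeS hanti).1 hyD with ⟨-, hk, hc, hL⟩ | ⟨h, -⟩
      · simp only at hk hc hL
        have := hcan y₁ hy₁ (y₂ - k) hc hL
        rw [Nat.sub_add_cancel hk] at this
        exact ⟨hy₁, hk, hc, by dsimp only; omega⟩
      · exact absurd hy₁ (by simp only at h ⊢; omega)
    · exact absurd hTy (hrow y₂ hjy hyD)
  refine card_le_card_of_injOn (fun y => y.2 - k) (fun y hy => ?_) fun y hy y' hy' h => ?_
  · obtain ⟨hy₁, -, hc, h⟩ := hcell y hy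
    exact mem_filter.2 ⟨mem_range.2 hc, by simp only; omega⟩
  · obtain ⟨-, hk₁, -, h₁⟩ := hcell y hy
    obtain ⟨-, hk₂, -, h₂⟩ := hcell y' hy'
    simp only at h
    rw [h] at h₁
    exact Prod.ext (by omega) (by omega)

open Classical in
lemma le_card_readBefore (hanti : Antitone lam) (hcan : CanonicalAbove n α k T r)
    (hrL : r ≤ stairLen n α) {w : ℕ} (hw : 1 ≤ w) :
    #{c ∈ range n | stairLen n α - r + w ≤ deltaUpColHt n α c} +
        #{y ∈ shapeS n α m lam k | y.1 = r ∧ j ≤ y.2 ∧ T y = w} ≤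
      #{y ∈ shapeS n α m lam k | ReadBefore (r, j) y ∧ T y = w} := by
  have hcell : ∀ c ∈ {c ∈ range n | stairLen n α - r + w ≤ deltaUpColHt n α c},
      stairLen n α + w - 1 - deltaUpColHt n α c < r ∧
      (stairLen n α + w - 1 - deltaUpColHt n α c, c + k) ∈
        {y ∈ shapeS n α m lam k | ReadBefore (r, j) y ∧ T y = w} := by
    intro c hc
    obtain ⟨hcn, hch⟩ := mem_filter.1 hc
    have hcn := mem_range.1 hcn
    have := deltaUpColHt_le_stairLen (n := n) (α := α) c
    have hrow : stairLen n α + w - 1 - deltaUpColHt n α c < r := by omega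
    refine ⟨hrow, mem_filter.2 ⟨mk_add_mem_shapeS hanti hcn (by omega) (by omega),
      Or.inl hrow, ?_⟩⟩
    rw [hcan _ hrow _ hcn (by omega)]
    omega
  rw [← card_image_of_injOn (s := {c ∈ range n | _})
      (f := fun c => (stairLen n α + w - 1 - deltaUpColHt n α c, c + k)) fun c _ c' _ h => by
        simpa using congrArg Prod.snd h,
    ← card_union_of_disjoint]
  · refine card_le_card fun y hy => ?_
    rcases mem_union.1 hy with hy | hy
    · obtain ⟨c, hc, rfl⟩ := mem_image.1 hy
      exact (hcell c hc).2
    · obtain ⟨hyD, hy₁, hjy, hTy⟩ := mem_filter.1 hy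
      exact mem_filter.2 ⟨hyD, Or.inr ⟨hy₁, hjy⟩, hTy⟩
  · refine disjoint_left.2 fun y hy hy' => ?_
    obtain ⟨c, hc, rfl⟩ := mem_image.1 hy
    have := (hcell c hc).1
    have := (mem_filter.1 hy').2.1
    omega

end Counting

section Lattice

variable {n : ℕ} {α : ℕ → ℕ} {m : ℕ} {lam : ℕ → ℕ} {k : ℕ} {T : ℕ × ℕ → ℕ}

lemma card_row_eq_entry_le (hanti : Antitone lam) (hT : IsSSYT (shapeS n α m lam k) T)
    (hlat : IsLattice (shapeS n α m lam k) T) {r j : ℕ} (hcan : CanonicalAbove n α k T r)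
    (hrL : r ≤ stairLen n α) (hx : (r, j) ∈ shapeS n α m lam k) (ht : 2 ≤ T (r, j)) :
    #{y ∈ shapeS n α m lam k | y.1 = r ∧ j ≤ y.2 ∧ T y = T (r, j)} ≤
      #{c ∈ range n | deltaUpColHt n α c + r + 1 = stairLen n α + T (r, j)} := by
  have hprev := card_readBefore_le (w := T (r, j) - 1) hanti hcan hrL fun _ hjj' hj' => by
    have := entry_le_entry_of_mem_shapeS hanti hT hx hj' hjj'
    omega
  have hcur := le_card_readBefore (m := m) (j := j) (w := T (r, j)) hanti hcan hrL (by omega)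
  have hlattice := hlat (r, j) hx (T (r, j) - 2)
  rw [show T (r, j) - 2 + 2 = T (r, j) by omega,
    show T (r, j) - 2 + 1 = T (r, j) - 1 by omega] at hlattice
  have hsplit := card_filter_le_deltaUpColHt (n := n) (α := α) (stairLen n α - r + (T (r, j) - 1))
  rw [show stairLen n α - r + (T (r, j) - 1) + 1 = stairLen n α - r + T (r, j) by omega,
    filter_congr fun c _ => show deltaUpColHt n α c = stairLen n α - r + (T (r, j) - 1) ↔
      deltaUpColHt n α c + r + 1 = stairLen n α + T (r, j) by omega] at hsplit
  omega

lemma entry_le_of_canonicalAbove (hanti : Antitone lam) (hT : IsSSYT (shapeS n α m lam k) T)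
    (hlat : IsLattice (shapeS n α m lam k) T) {r c : ℕ} (hcan : CanonicalAbove n α k T r)
    (hr : r < stairLen n α) (hc : c < n) (hL : stairLen n α ≤ r + deltaUpColHt n α c)
    (hright : ∀ c', c < c' → c' < n →
      T (r, c' + k) = r + deltaUpColHt n α c' + 1 - stairLen n α) :
    T (r, c + k) ≤ r + deltaUpColHt n α c + 1 - stairLen n α := by
  by_contra! hgt
  have hx := mk_add_mem_shapeS (m := m) (lam := lam) (k := k) hanti hc hr hL
  set C := {c' ∈ range n | deltaUpColHt n α c' + r + 1 = stairLen n α + T (r, c + k)}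
  -- the columns of `C` are taller than column `c`, so their entry in row `r` is also `T (r, c + k)`
  have hC : ∀ c' ∈ C, c < c' ∧ c' < n ∧ stairLen n α ≤ r + deltaUpColHt n α c' := by
    intro c' hc'
    obtain ⟨hc'n, hc'h⟩ := mem_filter.1 hc'
    refine ⟨lt_of_not_ge fun hle => ?_, mem_range.1 hc'n, by omega⟩
    have := deltaUpColHt_mono (n := n) (α := α) hle
    omega
  have hsub : insert (r, c + k) (C.image fun c' => (r, c' + k)) ⊆
      {y ∈ shapeS n α m lam k | y.1 = r ∧ c + k ≤ y.2 ∧ T y = T (r, c + k)} := by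
    intro y hy
    rcases mem_insert.1 hy with rfl | hy
    · exact mem_filter.2 ⟨hx, rfl, le_rfl, rfl⟩
    · obtain ⟨c', hc', rfl⟩ := mem_image.1 hy
      obtain ⟨hcc', hc'n, hL'⟩ := hC c' hc'
      refine mem_filter.2 ⟨mk_add_mem_shapeS hanti hc'n hr hL', rfl, by omega, ?_⟩
      rw [hright c' hcc' hc'n]
      have := (mem_filter.1 hc').2
      omega
  have hnot : (r, c + k) ∉ C.image fun c' => (r, c' + k) := fun h => by
    obtain ⟨c', hc', he⟩ := mem_image.1 h
    have := (hC c' hc').1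
    simp only [Prod.mk.injEq] at he
    omega
  have := card_le_card hsub
  rw [card_insert_of_notMem hnot, card_image_of_injective _ fun a b h => by simpa using h] at this
  have : _ ≤ #C := card_row_eq_entry_le hanti hT hlat hcan hr.le hx (by omega)
  omega

lemma CanonicalAbove.succ (hanti : Antitone lam) (hT : IsSSYT (shapeS n α m lam k) T)
    (hlat : IsLattice (shapeS n α m lam k) T) {r : ℕ} (hcan : CanonicalAbove n α k T r)
    (hr : r < stairLen n α) : CanonicalAbove n α k T (r + 1) := by
  have hrow : ∀ c, c < n → stairLen n α ≤ r + deltaUpColHt n α c →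
      T (r, c + k) = r + deltaUpColHt n α c + 1 - stairLen n α := by
    refine Nat.strong_decreasing_induction ⟨n, fun c hc h => absurd h (by omega)⟩
      fun c ih hc hL => le_antisymm ?_ (le_stair_entry hanti hT hc r hr hL)
    refine entry_le_of_canonicalAbove hanti hT hlat hcan hr hc hL fun c' hcc' hc' => ih c' hcc' hc' ?_
    have := deltaUpColHt_mono (n := n) (α := α) hcc'.le
    omega
  intro r' hr'
  rcases Nat.lt_succ_iff_lt_or_eq.1 hr' with h | rfl
  · exact hcan r' h
  · exact hrow

lemma canonicalAbove_stairLen (hanti : Antitone lam) (hT : IsSSYT (shapeS n α m lam k) T)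
    (hlat : IsLattice (shapeS n α m lam k) T) : CanonicalAbove n α k T (stairLen n α) := by
  suffices ∀ r ≤ stairLen n α, CanonicalAbove n α k T r from this _ le_rfl
  intro r
  induction r with
  | zero => exact fun _ _ h => absurd h (Nat.not_lt_zero _)
  | succ r ih => exact fun hr => (ih (by omega)).succ hanti hT hlat hr

end Lattice

section Foundation

variable {n : ℕ} {α : ℕ → ℕ} {m : ℕ} {lam : ℕ → ℕ} {k : ℕ} {T : ℕ × ℕ → ℕ}

lemma two_le_entry_foundation (hα : IsComposition n α) (hanti : Antitone lam)
    (hm : ∀ i, m ≤ i → lam i = 0) (hT : IsSSYT (shapeS n α m lam k) T) (hk : lam 0 ≤ n + k)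
    {j : ℕ} (hkj : k ≤ j) (hj : j < lam 0) : 2 ≤ T (stairLen n α, j) := by
  have hc : j - k < n := by omega
  have := deltaUpColHt_pos hα hc
  have := deltaUpColHt_le_stairLen (n := n) (α := α) (j - k)
  have hL : stairLen n α - 1 + 1 = stairLen n α := by omega
  have hup := mk_add_mem_shapeS (α := α) (m := m) (lam := lam) (k := k) hanti hc
    (r := stairLen n α - 1) (by omega) (by omega)
  rw [Nat.sub_add_cancel hkj] at hup
  have hlt := hT.2.2 _ _ hup (by rw [hL]; exact stairLen_mk_mem_shapeS hanti hm hj)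
  rw [hL] at hlt
  have := hT.1 _ hup
  omega

lemma card_foundationRow_le (hanti : Antitone lam) (hm : ∀ i, m ≤ i → lam i = 0)
    (hT : IsSSYT (shapeS n α m lam k) T) (hlat : IsLattice (shapeS n α m lam k) T) {j : ℕ}
    (hj : j < lam 0) (ht : 2 ≤ T (stairLen n α, j)) :
    #{y ∈ shapeS n α m lam k | y.1 = stairLen n α ∧ j ≤ y.2 ∧ T y = T (stairLen n α, j)} ≤
      #{c ∈ range n | deltaUpColHt n α c + 1 = T (stairLen n α, j)} := by
  have := card_row_eq_entry_le hanti hT hlat (canonicalAbove_stairLen hanti hT hlat) le_rfl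
    (stairLen_mk_mem_shapeS hanti hm hj) ht
  rwa [filter_congr fun c _ => show deltaUpColHt n α c + stairLen n α + 1 =
    stairLen n α + T (stairLen n α, j) ↔ deltaUpColHt n α c + 1 = T (stairLen n α, j) by omega]
    at this

lemma exists_deltaUpColHt_add_one_eq_entry (hanti : Antitone lam) (hm : ∀ i, m ≤ i → lam i = 0)
    (hT : IsSSYT (shapeS n α m lam k) T) (hlat : IsLattice (shapeS n α m lam k) T) {j : ℕ}
    (hj : j < lam 0) (ht : 2 ≤ T (stairLen n α, j)) :
    ∃ c < n, deltaUpColHt n α c + 1 = T (stairLen n α, j) := by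
  have hpos : 0 < #{y ∈ shapeS n α m lam k |
      y.1 = stairLen n α ∧ j ≤ y.2 ∧ T y = T (stairLen n α, j)} :=
    card_pos.2 ⟨_, mem_filter.2 ⟨stairLen_mk_mem_shapeS hanti hm hj, rfl, le_rfl, rfl⟩⟩
  obtain ⟨c, hc⟩ := card_pos.1 (hpos.trans_le (card_foundationRow_le hanti hm hT hlat hj ht))
  exact ⟨c, mem_range.1 (mem_filter.1 hc).1, (mem_filter.1 hc).2⟩

lemma eq_of_entry_foundation_eq (hα : IsComposition n α) (hanti : Antitone lam)
    (hm : ∀ i, m ≤ i → lam i = 0) (hT : IsSSYT (shapeS n α m lam k) T)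
    (hlat : IsLattice (shapeS n α m lam k) T) {j₁ j₂ : ℕ} (hj₁₂ : j₁ ≤ j₂) (hj₂ : j₂ < lam 0)
    (ht : 2 ≤ T (stairLen n α, j₁)) (heq : T (stairLen n α, j₂) = T (stairLen n α, j₁)) :
    j₁ = j₂ := by
  by_contra hne
  have hsub : {(stairLen n α, j₁), (stairLen n α, j₂)} ⊆ {y ∈ shapeS n α m lam k |
      y.1 = stairLen n α ∧ j₁ ≤ y.2 ∧ T y = T (stairLen n α, j₁)} := by
    intro y hy
    rcases mem_insert.1 hy with rfl | hy
    · exact mem_filter.2 ⟨stairLen_mk_mem_shapeS hanti hm (by omega), rfl, le_rfl, rfl⟩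
    · rw [mem_singleton.1 hy]
      exact mem_filter.2 ⟨stairLen_mk_mem_shapeS hanti hm hj₂, rfl, hj₁₂, heq⟩
  have := (card_le_card hsub).trans (card_foundationRow_le hanti hm hT hlat (by omega) ht)
  rw [card_pair fun h => hne (Prod.ext_iff.1 h).2] at this
  have := card_filter_deltaUpColHt_add_one_eq_le_one hα (T (stairLen n α, j₁))
  omega

end Foundation

theorem firstRow_mem_R_general (n : ℕ) (α : ℕ → ℕ) (hα : IsComposition n α)
    (m : ℕ) (lam : ℕ → ℕ) (hanti : Antitone lam) (hm : ∀ i, m ≤ i → lam i = 0)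
    (k : ℕ) (hk : lam 0 ≤ n + k)
    (T : (ℕ × ℕ) → ℕ)
    (hT : IsSSYT (shapeS n α m lam k) T)
    (hlat : IsLattice (shapeS n α m lam k) T) :
    (∀ j < lam 0, T (stairLen n α, j) ∈ Rfin n α k) ∧
    ((Finset.range (lam 0)).filter fun j => T (stairLen n α, j) = 1).card ≤ k ∧
    (∀ t : ℕ, t ≠ 1 →
      ((Finset.range (lam 0)).filter fun j => T (stairLen n α, j) = t).card ≤ 1) := by
  have hpos : ∀ j < lam 0, 1 ≤ T (stairLen n α, j) := fun j hj =>
    hT.1 _ (stairLen_mk_mem_shapeS hanti hm hj)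
  have hone : ∀ j < lam 0, T (stairLen n α, j) = 1 → j < k := fun j hj h1 => by
    by_contra! hkj
    have := two_le_entry_foundation hα hanti hm hT hk hkj hj
    omega
  refine ⟨fun j hj => ?_, ?_, fun t ht1 => card_le_one.2 fun j₁ hj₁ j₂ hj₂ => ?_⟩
  · rcases (hpos j hj).eq_or_lt with h1 | h2
    · rw [← h1]
      exact one_mem_Rfin (by have := hone j hj h1.symm; omega)
    · obtain ⟨c, hc, hct⟩ := exists_deltaUpColHt_add_one_eq_entry hanti hm hT hlat hj h2
      rw [← hct, add_comm]
      exact one_add_deltaUpColHt_mem_Rfin hc k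
  · calc _ ≤ #(range k) := card_le_card fun j hj => by
          obtain ⟨hj, h1⟩ := mem_filter.1 hj
          exact mem_range.2 (hone j (mem_range.1 hj) h1)
      _ = k := card_range k
  · obtain ⟨hj₁, ht₁⟩ := mem_filter.1 hj₁
    obtain ⟨hj₂, ht₂⟩ := mem_filter.1 hj₂
    have h2 : 2 ≤ T (stairLen n α, j₁) := by have := hpos j₁ (mem_range.1 hj₁); omega
    rcases le_total j₁ j₂ with h | h
    · exact eq_of_entry_foundation_eq hα hanti hm hT hlat h (mem_range.1 hj₂) h2 (ht₂.trans ht₁.symm)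
    · exact (eq_of_entry_foundation_eq hα hanti hm hT hlat h (mem_range.1 hj₁) (ht₂ ▸ ht₁ ▸ h2)
        (ht₁.trans ht₂.symm)).symm

/-- In a lattice SSYT of shape `S(λ,α;k)`, the entries of the first
row of the foundation lie in `R_{α,k}`; `1` appears at most `k` times there and
every other value at most once. -/
theorem firstRow_mem_R (n : ℕ) (α : ℕ → ℕ) (hα : IsComposition n α)
    (m : ℕ) (lam : ℕ → ℕ) (hanti : Antitone lam) (hm : ∀ i, m ≤ i → lam i = 0)
    (hpos : ∀ i < m, 0 < lam i) (k : ℕ) (hk : lam 0 ≤ n + k)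
    (T : (ℕ × ℕ) → ℕ)
    (hT : IsSSYT (shapeS n α m lam k) T)
    (hT0 : ∀ x ∉ shapeS n α m lam k, T x = 0)
    (hlat : IsLattice (shapeS n α m lam k) T) :
    (∀ j < lam 0, T (stairLen n α, j) ∈ Rfin n α k) ∧
    ((Finset.range (lam 0)).filter fun j => T (stairLen n α, j) = 1).card ≤ k ∧
    (∀ t : ℕ, t ≠ 1 →
      ((Finset.range (lam 0)).filter fun j => T (stairLen n α, j) = t).card ≤ 1) :=
  firstRow_mem_R_general n α hα m lam hanti hm k hk T hT hlat

end SchurStair
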